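/- arXiv:math/0412039 — 2 statements merged into one kernel-verified Lean document; each statement's English description precedes it below -/
import Mathlib

section
/- For every positive integer n and every s with Re(s) = 0 is the only possible location of zeros of the divisor function σ_s(n) = ∑_{d | n} d^s viewed as a function of complex s: if σ_s(n) = 0 then Re(s) = 0. -/
/-!
The map `d ↦ d ^ s` is multiplicative, so `σ_s(n)` is the product over `p ^ e ∥ n`
of the geometric sums `1 + z + ⋯ + z ^ e` with `z = p ^ s`. If one factor vanishes then `z ≠ 1`
and `z ^ (e + 1) = 1`, hence `1 = ‖z‖ = p ^ (Re s)`, which forces `Re s = 0` since `p > 1`.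
-/

open Finset
open scoped ArithmeticFunction.zeta

namespace ArithmeticFunction

/-- `d ↦ d ^ s`, set to `0` at `0` by hand since `0 ^ 0 = 1` in `ℂ`. -/
noncomputable def natCpow (s : ℂ) : ArithmeticFunction ℂ :=
  ⟨fun d => if d = 0 then 0 else (d : ℂ) ^ s, if_pos rfl⟩

variable {s : ℂ}

theorem natCpow_apply {d : ℕ} (hd : d ≠ 0) : natCpow s d = (d : ℂ) ^ s :=
  if_neg hd

theorem natCpow_mul (m n : ℕ) : natCpow s (m * n) = natCpow s m * natCpow s n := by
  rcases eq_or_ne m 0 with rfl | hm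
  · simp [natCpow]
  rcases eq_or_ne n 0 with rfl | hn
  · simp [natCpow]
  rw [natCpow_apply (mul_ne_zero hm hn), natCpow_apply hm, natCpow_apply hn, Nat.cast_mul,
    Complex.natCast_mul_natCast_cpow]

theorem isMultiplicative_natCpow (s : ℂ) : (natCpow s).IsMultiplicative :=
  ⟨by simp [natCpow], fun _ => natCpow_mul _ _⟩

theorem natCpow_pow {p : ℕ} (hp : p ≠ 0) (k : ℕ) : natCpow s (p ^ k) = ((p : ℂ) ^ s) ^ k := by
  rw [natCpow_apply (pow_ne_zero k hp), Nat.cast_pow, ← Complex.natCast_cpow_natCast_mul,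
    Complex.cpow_nat_mul]

theorem IsMultiplicative.exists_prime_sum_range_pow_eq_zero {R : Type*} [CommSemiring R]
    [NoZeroDivisors R] [Nontrivial R] {f : ArithmeticFunction R} (hf : f.IsMultiplicative)
    {n : ℕ} (hn : n ≠ 0) (h : ∑ d ∈ n.divisors, f d = 0) :
    ∃ p : ℕ, p.Prime ∧ ∃ e : ℕ, ∑ k ∈ range (e + 1), f (p ^ k) = 0 := by
  have hfζ : (f * ζ).IsMultiplicative := hf.mul isMultiplicative_zeta.natCast
  rw [← coe_mul_zeta_apply, hfζ.multiplicative_factorization _ hn] at h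
  obtain ⟨p, hp, hp0⟩ := prod_eq_zero_iff.mp h
  dsimp only at hp0
  have hpp : p.Prime := Nat.prime_of_mem_primeFactors hp
  refine ⟨p, hpp, n.factorization p, ?_⟩
  rwa [coe_mul_zeta_apply, Nat.sum_divisors_prime_pow hpp] at hp0

end ArithmeticFunction

namespace Complex

theorem norm_eq_one_of_geom_sum_eq_zero {z : ℂ} {m : ℕ} (hm : m ≠ 0)
    (h : ∑ k ∈ range m, z ^ k = 0) : ‖z‖ = 1 := by
  have hz : z ≠ 1 := by
    rintro rfl
    simp [hm] at h
  rw [geom_sum_eq hz, div_eq_zero_iff, sub_eq_zero, sub_eq_zero] at h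
  exact norm_eq_one_of_pow_eq_one (h.resolve_right hz) hm

theorem re_eq_zero_of_norm_natCast_cpow_eq_one {p : ℕ} (hp : 1 < p) {s : ℂ}
    (h : ‖(p : ℂ) ^ s‖ = 1) : s.re = 0 := by
  have hp₀ : (0 : ℝ) < p := by positivity
  rw [norm_natCast_cpow_of_pos (by omega), ← Real.rpow_zero (p : ℝ),
    Real.rpow_right_inj hp₀ (by exact_mod_cast hp.ne')] at h
  exact h

end Complex

open ArithmeticFunction in
theorem stmt_4 (n : ℕ) (hn : 0 < n) (s : ℂ)
    (h : ∑ d ∈ n.divisors, (d : ℂ) ^ s = 0) : s.re = 0 := by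
  have hsum : ∑ d ∈ n.divisors, natCpow s d = 0 := by
    rwa [sum_congr rfl fun d hd => natCpow_apply (Nat.pos_of_mem_divisors hd).ne']
  obtain ⟨p, hp, e, he⟩ :=
    (isMultiplicative_natCpow s).exists_prime_sum_range_pow_eq_zero hn.ne' hsum
  simp only [natCpow_pow hp.ne_zero] at he
  exact Complex.re_eq_zero_of_norm_natCast_cpow_eq_one hp.one_lt
    (Complex.norm_eq_one_of_geom_sum_eq_zero e.succ_ne_zero he)
end

section
/- For real σ with 1/2 < σ < 1 and a zero ρ = β + iγ with 0 < β < 1 and γ > 14, the derivative g(σ) of the function -2(2σ-β)/((2σ-β)² + γ²) + 2(2σ-2+β)/((2σ-2+β)² + γ²) with respect to σ is strictly positive. -/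
theorem stmt_12 (β γ : ℝ) (hβ0 : 0 < β) (hβ1 : β < 1) (hγ : 14 < γ)
    (σ : ℝ) (hσ1 : 1/2 < σ) (hσ2 : σ < 1) :
    0 < deriv (fun u : ℝ =>
      -2 * (2 * u - β) / ((2 * u - β) ^ 2 + γ ^ 2) +
        2 * (2 * u - 2 + β) / ((2 * u - 2 + β) ^ 2 + γ ^ 2)) σ := by
  have hγ2 : (0:ℝ) < γ ^ 2 := by nlinarith
  set a := 2*σ - β with ha
  set b := 2*σ - 2 + β with hb
  have hda : (a ^ 2 + γ ^ 2) ≠ 0 := by positivity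
  have hdb : (b ^ 2 + γ ^ 2) ≠ 0 := by positivity
  have hlin1 : HasDerivAt (fun u : ℝ => 2 * u - β) 2 σ := by
    simpa using ((hasDerivAt_id σ).const_mul 2).sub_const β
  have hlin2 : HasDerivAt (fun u : ℝ => 2 * u - 2 + β) 2 σ := by
    simpa using (((hasDerivAt_id σ).const_mul 2).sub_const 2).add_const β
  have hden1 : HasDerivAt (fun u : ℝ => (2 * u - β) ^ 2 + γ ^ 2) (2 * a * 2) σ := by
    simpa using ((hlin1.pow 2).add_const (γ ^ 2))
  have hden2 : HasDerivAt (fun u : ℝ => (2 * u - 2 + β) ^ 2 + γ ^ 2) (2 * b * 2) σ := by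
    simpa using ((hlin2.pow 2).add_const (γ ^ 2))
  have hnum1 : HasDerivAt (fun u : ℝ => 2 * (2 * u - β)) (2 * 2) σ := hlin1.const_mul 2
  have hnum2 : HasDerivAt (fun u : ℝ => 2 * (2 * u - 2 + β)) (2 * 2) σ := hlin2.const_mul 2
  have hf1 : HasDerivAt (fun u : ℝ => 2 * (2 * u - β) / ((2 * u - β) ^ 2 + γ ^ 2))
      ((2 * 2 * (a ^ 2 + γ ^ 2) - 2 * a * (2 * a * 2)) / (a ^ 2 + γ ^ 2) ^ 2) σ :=
    hnum1.div hden1 hda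
  have hf2 : HasDerivAt (fun u : ℝ => 2 * (2 * u - 2 + β) / ((2 * u - 2 + β) ^ 2 + γ ^ 2))
      ((2 * 2 * (b ^ 2 + γ ^ 2) - 2 * b * (2 * b * 2)) / (b ^ 2 + γ ^ 2) ^ 2) σ :=
    hnum2.div hden2 hdb
  have hF : HasDerivAt (fun u : ℝ =>
      -2 * (2 * u - β) / ((2 * u - β) ^ 2 + γ ^ 2) +
        2 * (2 * u - 2 + β) / ((2 * u - 2 + β) ^ 2 + γ ^ 2))
      (-((2 * 2 * (a ^ 2 + γ ^ 2) - 2 * a * (2 * a * 2)) / (a ^ 2 + γ ^ 2) ^ 2) +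
        (2 * 2 * (b ^ 2 + γ ^ 2) - 2 * b * (2 * b * 2)) / (b ^ 2 + γ ^ 2) ^ 2) σ := by
    have h := hf1.neg.add hf2
    have heq : (fun u : ℝ =>
        -2 * (2 * u - β) / ((2 * u - β) ^ 2 + γ ^ 2) +
          2 * (2 * u - 2 + β) / ((2 * u - 2 + β) ^ 2 + γ ^ 2)) =
        fun u : ℝ => -(2 * (2 * u - β) / ((2 * u - β) ^ 2 + γ ^ 2)) +
          2 * (2 * u - 2 + β) / ((2 * u - 2 + β) ^ 2 + γ ^ 2) := by
      funext u; ring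
    rw [heq]; exact h
  rw [hF.deriv]
  -- positivity of the derivative value
  have hab : a ^ 2 - b ^ 2 > 0 := by
    have h1 : a - b = 2 - 2 * β := by rw [ha, hb]; ring
    have h2 : a + b = 4 * σ - 2 := by rw [ha, hb]; ring
    nlinarith [sq_nonneg (a - b), sq_nonneg (a + b)]
  have ha2 : a ^ 2 < 4 := by
    have : a < 2 := by rw [ha]; nlinarith
    have : -2 < a := by rw [ha]; nlinarith
    nlinarith
  have hb2 : b ^ 2 < 1 := by
    have : b < 1 := by rw [hb]; nlinarith
    have : -1 < b := by rw [hb]; nlinarith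
    nlinarith
  have hN : 0 < (a ^ 2 - b ^ 2) * (3 * γ ^ 4 + γ ^ 2 * (a ^ 2 + b ^ 2) - a ^ 2 * b ^ 2) := by
    apply mul_pos hab
    have hγsq : (196:ℝ) < γ ^ 2 := by nlinarith
    have hγ4 : (196:ℝ) ^ 2 < γ ^ 4 := by nlinarith [sq_nonneg γ]
    nlinarith [sq_nonneg a, sq_nonneg b, mul_pos hγ2 hγ2, mul_nonneg (sq_nonneg a) (sq_nonneg b)]
  have key : -((2 * 2 * (a ^ 2 + γ ^ 2) - 2 * a * (2 * a * 2)) / (a ^ 2 + γ ^ 2) ^ 2) +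
        (2 * 2 * (b ^ 2 + γ ^ 2) - 2 * b * (2 * b * 2)) / (b ^ 2 + γ ^ 2) ^ 2 =
      4 * ((a ^ 2 - b ^ 2) * (3 * γ ^ 4 + γ ^ 2 * (a ^ 2 + b ^ 2) - a ^ 2 * b ^ 2)) /
        ((a ^ 2 + γ ^ 2) ^ 2 * (b ^ 2 + γ ^ 2) ^ 2) := by
    field_simp
    ring
  rw [key]
  positivity
end
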